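/- An element x ∈ ℤ^n is a real root of degree 1 (i.e. x ∈ W·β and deg(x) = 1) if and only if every coordinate x_i lies in {0, 1} and exactly k of the coordinates equal 1 (equivalently, dec(x) = β). -/

import Mathlib

open Finset

/-- `stdE n m` is the standard basis vector `e_m` (1-based index `m`) of `ℚ^n`. -/
def stdE (n m : ℕ) : Fin n → ℚ := fun j => if (j : ℕ) + 1 = m then 1 else 0

/-- the simple root `α_i = e_{i+1} - e_i` (1-based, for `1 ≤ i ≤ n-1`). -/
def alphaRoot (n i : ℕ) : Fin n → ℚ := stdE n (i + 1) - stdE n i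

/-- the simple root `β = e_1 + ⋯ + e_k`. -/
def betaRoot (n k : ℕ) : Fin n → ℚ := fun j => if (j : ℕ) < k then 1 else 0

/-- the quadratic form `q(x) = Σ x_i² + ((2-k)/k²)(Σ x_i)²`. -/
def qform (n k : ℕ) (x : Fin n → ℚ) : ℚ :=
  (∑ i, (x i) ^ 2) + ((2 - (k : ℚ)) / (k : ℚ) ^ 2) * (∑ i, x i) ^ 2

/-- the inner product obtained as the polarization of `q`. -/
def ip (n k : ℕ) (x y : Fin n → ℚ) : ℚ :=
  (qform n k (x + y) - qform n k x - qform n k y) / 2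

/-- the degree `deg(x) = (x_1 + ⋯ + x_n)/k`. -/
def degv (n k : ℕ) (x : Fin n → ℚ) : ℚ := (∑ i, x i) / (k : ℚ)

/-- `r(x) = x_{k+1} + ⋯ + x_n - 2 deg(x)`. -/
def rco (n k : ℕ) (x : Fin n → ℚ) : ℚ :=
  (∑ i ∈ Finset.univ.filter (fun i : Fin n => k ≤ (i : ℕ)), x i) - 2 * degv n k x

/-- the reflection `s_β : x ↦ x + r(x)·β`. -/
def sBeta (n k : ℕ) (x : Fin n → ℚ) : Fin n → ℚ := x + rco n k x • betaRoot n k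

/-- the map swapping coordinates `a` and `b` (0-based). -/
def sSwap (n : ℕ) (a b : Fin n) (x : Fin n → ℚ) : Fin n → ℚ := x ∘ Equiv.swap a b

/-- The Weyl group: the subgroup of bijections of `ℚ^n` generated by the simple
reflections `s_1, …, s_{n-1}` (as functions: `sSwap` of adjacent coordinates,
0-based) and `s_β` (as a function: `sBeta`). -/
def weyl (n k : ℕ) : Subgroup (Equiv.Perm (Fin n → ℚ)) :=
  Subgroup.closure
    {σ | ⇑σ = sBeta n k ∨ ∃ a b : Fin n, (a : ℕ) + 1 = (b : ℕ) ∧ ⇑σ = sSwap n a b}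

/-- The set of real roots: the orbit `W·β`. -/
def realRoots (n k : ℕ) : Set (Fin n → ℚ) :=
  {x | ∃ σ ∈ weyl n k, σ (betaRoot n k) = x}

/-- `dec x`: the coordinates of `x` rearranged in weakly decreasing order. -/
def dec {n : ℕ} (x : Fin n → ℚ) : Fin n → ℚ := fun i => x (Tuple.sort x i.rev)

/-!
The quadratic form `q` is `W`-invariant: `s_β` is the reflection in `β` for the polarization
`ip` of `q`, because `r(x) = -ip(x, β)` and `q(β) = 2`. A real root `x` of degree one therefore
has `q(x) = 2` and `∑ xᵢ = k`, which forces `∑ xᵢ² = ∑ xᵢ`; since `xᵢ ≤ xᵢ²` for integers, every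
coordinate is `0` or `1`. Conversely, a `0/1`-vector with `k` ones is a coordinate permutation of
`β`, and every coordinate permutation lies in `W` because adjacent transpositions generate the
symmetric group.
-/

lemma sum_add_mul_sq {ι : Type*} [Fintype ι] (f g : ι → ℚ) (t : ℚ) :
    ∑ i, (f i + t * g i) ^ 2 = ∑ i, f i ^ 2 + 2 * t * ∑ i, f i * g i + t ^ 2 * ∑ i, g i ^ 2 := by
  simp only [Finset.mul_sum, ← Finset.sum_add_distrib]
  exact Finset.sum_congr rfl fun i _ => by ring

lemma eq_zero_or_one_of_sum_sq_eq_sum {ι : Type*} [Fintype ι] {x : ι → ℤ}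
    (h : ∑ i, x i ^ 2 = ∑ i, x i) (i : ι) : x i = 0 ∨ x i = 1 := by
  have hle : ∀ i ∈ Finset.univ, x i ≤ x i ^ 2 := fun i _ => Int.le_self_sq (x i)
  exact eq_zero_or_one_of_sq_eq_self
    ((Finset.sum_eq_sum_iff_of_le hle).mp h.symm i (Finset.mem_univ i)).symm

lemma sum_eq_card_filter_eq_one {ι : Type*} [Fintype ι] {x : ι → ℤ}
    (h : ∀ i, x i = 0 ∨ x i = 1) : ∑ i, x i = #{i | x i = 1} := by
  rw [← Finset.sum_boole]
  refine Finset.sum_congr rfl fun i _ => ?_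
  rcases h i with h | h <;> simp [h]

lemma exists_perm_iff_of_card_eq {α : Type*} [Fintype α] {p q : α → Prop} [DecidablePred p]
    [DecidablePred q] (h : #{a | p a} = #{a | q a}) : ∃ π : Equiv.Perm α, ∀ a, q (π a) ↔ p a := by
  have hin : Fintype.card {a // p a} = Fintype.card {a // q a} := by
    simpa only [Fintype.card_subtype] using h
  have hout : Fintype.card {a // ¬p a} = Fintype.card {a // ¬q a} := by
    rw [Fintype.card_subtype_compl, Fintype.card_subtype_compl, hin]
  refine ⟨Equiv.subtypeCongr (Fintype.equivOfCardEq hin) (Fintype.equivOfCardEq hout), fun a => ?_⟩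
  by_cases ha : p a
  · simpa [Equiv.subtypeCongr, ha] using (Fintype.equivOfCardEq hin ⟨a, ha⟩).2
  · simpa [Equiv.subtypeCongr, ha] using (Fintype.equivOfCardEq hout ⟨a, ha⟩).2

section QuadraticForm

variable {n k : ℕ}

lemma sum_betaRoot (hkn : k ≤ n) : ∑ i, betaRoot n k i = k := by
  simp [betaRoot, Finset.sum_boole, Fin.card_filter_val_lt, hkn]

lemma ip_eq (x y : Fin n → ℚ) :
    ip n k x y = ∑ i, x i * y i + (2 - k) / k ^ 2 * (∑ i, x i) * ∑ i, y i := by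
  have h := sum_add_mul_sq x y 1
  simp only [one_mul, one_pow] at h
  simp only [ip, qform, Pi.add_apply, h, Finset.sum_add_distrib]
  ring

lemma qform_add_smul (x y : Fin n → ℚ) (t : ℚ) :
    qform n k (x + t • y) = qform n k x + 2 * t * ip n k x y + t ^ 2 * qform n k y := by
  simp only [ip_eq, qform, Pi.add_apply, Pi.smul_apply, smul_eq_mul, sum_add_mul_sq,
    Finset.sum_add_distrib, ← Finset.mul_sum]
  ring

lemma qform_betaRoot (hk : k ≠ 0) (hkn : k ≤ n) : qform n k (betaRoot n k) = 2 := by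
  have hsq : ∑ i, betaRoot n k i ^ 2 = k := by
    rw [← sum_betaRoot hkn]
    refine Finset.sum_congr rfl fun i _ => ?_
    unfold betaRoot
    split_ifs <;> norm_num
  rw [qform, hsq, sum_betaRoot hkn]
  field_simp
  ring

lemma rco_eq_neg_ip (hk : k ≠ 0) (hkn : k ≤ n) (x : Fin n → ℚ) :
    rco n k x = -ip n k x (betaRoot n k) := by
  have hsplit := Finset.sum_filter_add_sum_filter_not Finset.univ (fun i : Fin n => (i : ℕ) < k) x
  simp only [not_lt] at hsplit
  have hxβ : ∑ i, x i * betaRoot n k i =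
      ∑ i ∈ Finset.univ.filter (fun i : Fin n => (i : ℕ) < k), x i := by
    simp [betaRoot, Finset.sum_filter]
  rw [rco, degv, ip_eq, hxβ, sum_betaRoot hkn]
  field_simp
  linear_combination (k : ℚ) * hsplit

lemma qform_sBeta (hk : k ≠ 0) (hkn : k ≤ n) (x : Fin n → ℚ) :
    qform n k (sBeta n k x) = qform n k x := by
  rw [sBeta, qform_add_smul, qform_betaRoot hk hkn, rco_eq_neg_ip hk hkn]
  ring

lemma qform_comp_perm (x : Fin n → ℚ) (π : Equiv.Perm (Fin n)) :
    qform n k (x ∘ π) = qform n k x := by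
  simp only [qform, Function.comp_apply, Equiv.sum_comp π (fun i => x i ^ 2), Equiv.sum_comp π x]

lemma qform_weyl (hk : k ≠ 0) (hkn : k ≤ n) {σ : Equiv.Perm (Fin n → ℚ)} (hσ : σ ∈ weyl n k)
    (x : Fin n → ℚ) : qform n k (σ x) = qform n k x := by
  induction hσ using Subgroup.closure_induction generalizing x with
  | mem τ hτ =>
    rcases hτ with h | ⟨a, b, -, h⟩
    · rw [h, qform_sBeta hk hkn]
    · rw [h, sSwap, qform_comp_perm]
  | one => rfl
  | mul τ ρ _ _ hτ hρ => rw [Equiv.Perm.mul_apply, hτ, hρ]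
  | inv τ _ hτ => simpa using (hτ (τ⁻¹ x)).symm

lemma degv_eq_one_iff (hk : k ≠ 0) (x : Fin n → ℚ) : degv n k x = 1 ↔ ∑ i, x i = k :=
  div_eq_one_iff_eq (Nat.cast_ne_zero.mpr hk)

lemma sum_sq_eq_of_qform_eq_two (hk : k ≠ 0) {x : Fin n → ℚ} (hq : qform n k x = 2)
    (hs : ∑ i, x i = k) : ∑ i, x i ^ 2 = k := by
  rw [qform, hs] at hq
  field_simp at hq
  linarith

end QuadraticForm

section Permutations

attribute [local instance] arrowAction

lemma perm_smul_apply {α β : Type*} (π : Equiv.Perm α) (x : α → β) (a : α) :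
    (π • x) a = x (π⁻¹ a) :=
  rfl

lemma toPermHom_mem_weyl {n : ℕ} (k : ℕ) (π : Equiv.Perm (Fin n)) :
    MulAction.toPermHom _ (Fin n → ℚ) π ∈ weyl n k := by
  obtain _ | m := n
  · rw [Subsingleton.elim π 1, map_one]
    exact one_mem _
  have hswaps : Submonoid.closure (Set.range fun i : Fin m ↦ Equiv.swap i.castSucc i.succ) ≤
      ((weyl (m + 1) k).comap (MulAction.toPermHom _ _)).toSubmonoid := by
    rw [Submonoid.closure_le]
    rintro _ ⟨i, rfl⟩
    refine Subgroup.subset_closure (Or.inr ⟨i.castSucc, i.succ, rfl, ?_⟩)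
    ext x j
    simp [sSwap, perm_smul_apply, Equiv.swap_inv]
  rw [Equiv.Perm.mclosure_swap_castSucc_succ] at hswaps
  exact hswaps (Submonoid.mem_top π)

lemma betaRoot_comp_perm_mem_realRoots {n : ℕ} (k : ℕ) (π : Equiv.Perm (Fin n)) :
    betaRoot n k ∘ π ∈ realRoots n k :=
  ⟨_, toPermHom_mem_weyl k π⁻¹, by ext; simp [perm_smul_apply]⟩

end Permutations

theorem degree_one_real_roots_general (n k : ℕ) (hk : 1 ≤ k) (hkn : k < n)
    (x : Fin n → ℤ) :
    ((fun i => (x i : ℚ)) ∈ realRoots n k ∧ degv n k (fun i => (x i : ℚ)) = 1) ↔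
      ((∀ i, x i = 0 ∨ x i = 1) ∧ (Finset.univ.filter (fun i => x i = 1)).card = k) := by
  have hk0 : k ≠ 0 := Nat.one_le_iff_ne_zero.mp hk
  rw [degv_eq_one_iff hk0]
  constructor
  · rintro ⟨⟨σ, hσ, hσβ⟩, hsum⟩
    have hq : qform n k (fun i => (x i : ℚ)) = 2 := by
      rw [← hσβ, qform_weyl hk0 hkn.le hσ, qform_betaRoot hk0 hkn.le]
    have hsq := sum_sq_eq_of_qform_eq_two hk0 hq hsum
    have hsumZ : ∑ i, x i = k := by exact_mod_cast hsum
    have h01 := eq_zero_or_one_of_sum_sq_eq_sum (x := x) (by rw [hsumZ]; exact_mod_cast hsq)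
    exact ⟨h01, by exact_mod_cast (sum_eq_card_filter_eq_one h01).symm.trans hsumZ⟩
  · rintro ⟨h01, hcard⟩
    obtain ⟨π, hπ⟩ := exists_perm_iff_of_card_eq (p := fun i => x i = 1)
      (q := fun i : Fin n => (i : ℕ) < k)
      (by rw [hcard, Fin.card_filter_val_lt, min_eq_right hkn.le])
    have hx : (fun i => (x i : ℚ)) = betaRoot n k ∘ π := by
      ext i
      rcases h01 i with h | h <;> simp [betaRoot, hπ, h]
    rw [hx, Function.comp_def, Equiv.sum_comp π (betaRoot n k), sum_betaRoot hkn.le]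
    exact ⟨betaRoot_comp_perm_mem_realRoots k π, rfl⟩

theorem degree_one_real_roots (n k : ℕ) (hn : 2 ≤ n) (hk : 1 ≤ k) (hkn : k < n)
    (x : Fin n → ℤ) :
    ((fun i => (x i : ℚ)) ∈ realRoots n k ∧ degv n k (fun i => (x i : ℚ)) = 1) ↔
      ((∀ i, x i = 0 ∨ x i = 1) ∧ (Finset.univ.filter (fun i => x i = 1)).card = k) :=
  degree_one_real_roots_general n k hk hkn x
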